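/- Let d ≥ 1, let val : Finset(Fin d) → ℝ be a cooperation game with val(∅) = 0, and let (c_v), indexed by nonempty v ⊆ Fin d, be nonnegative coefficients satisfying val(u) = Σ_{∅ ≠ v ⊆ u} c_v for all u. Then for every nonempty u ⊆ Fin d, the Shapley-Owen value satisfies the bracketing inequalities c_u ≤ Sh_u(val) ≤ γ_u, where γ_u := Σ_{v : u ⊆ v} c_v, and moreover Sh_u(val) ≤ (1/2)·(val(u) + γ_u). -/

import Mathlib

/-!
Expand `val` in unanimity games, `val = ∑_{t ≠ ∅} c t • [t ⊆ ·]`; `ShOwen` is linear in `val`.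
For the unanimity game of `t` and `v ⊆ uᶜ`, the alternating sum over `w ⊆ u` is Möbius inversion
on the Boolean lattice and equals `[t \ v = u]`, i.e. `[u ⊆ t ∧ t \ u ⊆ v]`. What remains is
`∑_{t \ u ⊆ v ⊆ uᶜ} 1 / C(m, |v|) = (m + 1) / (|t \ u| + 1)` with `m = |uᶜ|`, so
`Sh_u(val) = ∑_{t ⊇ u} c t / (|t \ u| + 1)`. The weight is `1` at `t = u` and at most `1/2` for
`t ⊋ u`, which gives all three bounds when `c ≥ 0`.
-/

/-- The Shapley-Owen value of a nonempty coalition `u` in the cooperation game `val`. -/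
noncomputable def ShOwen {d : ℕ} (val : Finset (Fin d) → ℝ) (u : Finset (Fin d)) : ℝ :=
  ((d : ℝ) - u.card + 1)⁻¹ *
    ∑ v ∈ (uᶜ : Finset (Fin d)).powerset,
      (((d - u.card).choose v.card : ℝ))⁻¹ *
        ∑ w ∈ u.powerset, (-1 : ℝ) ^ (u.card - w.card) * val (v ∪ w)

open Finset

theorem Nat.sum_range_choose_div_choose_add (n k : ℕ) :
    ∑ i ∈ range (n + 1), (n.choose i : ℝ) / (n + k).choose (i + k) = (n + k + 1) / (k + 1) := by
  have hk : ((n + k).choose k : ℝ) ≠ 0 := by exact_mod_cast Nat.choose_ne_zero (by omega)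
  have hterm : ∀ i ∈ range (n + 1),
      (n.choose i : ℝ) / (n + k).choose (i + k) = (i + k).choose k / (n + k).choose k := by
    intro i hi
    have hi : i + k ≤ n + k := by simp at hi; omega
    have hik : ((n + k).choose (i + k) : ℝ) ≠ 0 := by exact_mod_cast Nat.choose_ne_zero hi
    have hmul := Nat.choose_mul (n := n + k) (Nat.le_add_left k i)
    simp only [Nat.add_sub_cancel] at hmul
    rw [div_eq_div_iff hik hk]
    exact_mod_cast (by rw [mul_comm ((i + k).choose k), hmul, mul_comm] :
      n.choose i * (n + k).choose k = (i + k).choose k * (n + k).choose (i + k))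
  have hstick : ((n + k + 1).choose (k + 1) : ℝ) * (k + 1) = (n + k + 1) * (n + k).choose k := by
    exact_mod_cast (Nat.add_one_mul_choose_eq (n + k) k).symm
  rw [sum_congr rfl hterm, ← sum_div, div_eq_div_iff hk (by positivity), ← Nat.cast_sum,
    Nat.sum_range_add_choose]
  exact hstick

namespace Finset

variable {α : Type*} [DecidableEq α]

theorem sdiff_eq_iff_of_disjoint {t u v : Finset α} (h : Disjoint v u) :
    t \ v = u ↔ u ⊆ t ∧ t \ u ⊆ v := by
  rw [disjoint_left] at h
  simp only [Finset.ext_iff, subset_iff, mem_sdiff]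
  grind

theorem sum_Icc_eq_sum_powerset_sdiff {M : Type*} [AddCommMonoid M] {r s : Finset α} (h : r ⊆ s)
    (f : Finset α → M) : ∑ v ∈ Icc r s, f v = ∑ x ∈ (s \ r).powerset, f (r ∪ x) := by
  rw [Icc_eq_image_powerset h, sum_image]
  intro x hx y hy hxy
  dsimp only at hxy
  simp only [coe_powerset, Set.mem_preimage, Set.mem_powerset_iff, coe_subset] at hx hy
  rw [← union_sdiff_cancel_left (disjoint_sdiff.mono_right hx), hxy,
    union_sdiff_cancel_left (disjoint_sdiff.mono_right hy)]

theorem sum_Icc_neg_one_pow_card_sub {R : Type*} [CommRing R] (r s : Finset α) :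
    ∑ w ∈ Icc r s, (-1 : R) ^ (#s - #w) = if r = s then 1 else 0 := by
  by_cases h : r ⊆ s
  · have hs : #s = #(s \ r) + #r := (card_sdiff_add_card_eq_card h).symm
    have hterm : ∀ x ∈ (s \ r).powerset,
        (-1 : R) ^ (#s - #(r ∪ x)) = (-1) ^ #(s \ r) * (-1) ^ #x := by
      intro x hx
      have hx : x ⊆ s \ r := mem_powerset.1 hx
      obtain ⟨e, he⟩ := Nat.exists_eq_add_of_le (card_le_card hx)
      rw [card_union_of_disjoint (disjoint_sdiff.mono_right hx), hs, he,
        show #x + e + #r - (#r + #x) = e by omega, pow_add, mul_comm, ← mul_assoc, ← pow_add,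
        ← two_mul, pow_mul, neg_one_sq, one_pow, one_mul]
    have halt := congrArg (Int.cast : ℤ → R) (sum_powerset_neg_one_pow_card (x := s \ r))
    push_cast at halt
    rw [sum_Icc_eq_sum_powerset_sdiff h, sum_congr rfl hterm, ← mul_sum, halt]
    by_cases hrs : r = s
    · simp [hrs]
    · have hsr : ¬s ⊆ r := fun hsr => hrs (h.antisymm hsr)
      simp [hrs, sdiff_eq_empty_iff_subset, hsr]
  · rw [Icc_eq_empty (by simpa using h), sum_empty, if_neg (by rintro rfl; exact h subset_rfl)]

theorem sum_Icc_inv_choose_card {r s : Finset α} (h : r ⊆ s) :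
    ∑ v ∈ Icc r s, ((#s).choose #v : ℝ)⁻¹ = (#s + 1) / (#r + 1) := by
  have hs : #s = #(s \ r) + #r := (card_sdiff_add_card_eq_card h).symm
  have hcard : ∀ x ∈ (s \ r).powerset, #(r ∪ x) = #x + #r := fun x hx => by
    rw [card_union_of_disjoint (disjoint_sdiff.mono_right (mem_powerset.1 hx)), add_comm]
  rw [sum_Icc_eq_sum_powerset_sdiff h, sum_congr rfl fun x hx => by rw [hcard x hx],
    sum_powerset_apply_card (fun i => ((#s).choose (i + #r) : ℝ)⁻¹), hs]
  simp only [nsmul_eq_mul, ← div_eq_mul_inv]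
  exact_mod_cast Nat.sum_range_choose_div_choose_add _ _

end Finset

def unanimityGame {α : Type*} [DecidableEq α] (t s : Finset α) : ℝ := if t ⊆ s then 1 else 0

theorem eq_sum_mul_unanimityGame {α : Type*} [Fintype α] [DecidableEq α] {val c : Finset α → ℝ}
    (hc : ∀ s, val s = ∑ v ∈ s.powerset.erase ∅, c v) :
    val = fun s => ∑ t ∈ (univ : Finset α).powerset.erase ∅, c t * unanimityGame t s := by
  funext s
  simp only [hc s, unanimityGame, mul_ite, mul_one, mul_zero]
  rw [← sum_filter]
  congr 1
  ext t
  simp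

theorem shOwen_sum_mul {d : ℕ} {ι : Type*} (T : Finset ι) (c : ι → ℝ)
    (g : ι → Finset (Fin d) → ℝ) (u : Finset (Fin d)) :
    ShOwen (fun s => ∑ i ∈ T, c i * g i s) u = ∑ i ∈ T, c i * ShOwen (g i) u := by
  simp only [ShOwen, mul_sum]
  symm
  rw [Finset.sum_comm]
  refine sum_congr rfl fun v _ => ?_
  rw [Finset.sum_comm]
  refine sum_congr rfl fun w _ => sum_congr rfl fun i _ => ?_
  ring

theorem shOwen_unanimityGame {d : ℕ} (t u : Finset (Fin d)) :
    ShOwen (unanimityGame t) u = if u ⊆ t then ((#(t \ u) : ℝ) + 1)⁻¹ else 0 := by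
  have inner : ∀ v ∈ (uᶜ : Finset (Fin d)).powerset,
      ∑ w ∈ u.powerset, (-1 : ℝ) ^ (#u - #w) * unanimityGame t (v ∪ w)
        = if u ⊆ t ∧ t \ u ⊆ v then 1 else 0 := by
    intro v hv
    have hvu : Disjoint v u := by simpa [subset_compl_iff_disjoint_right] using hv
    simp only [unanimityGame, mul_ite, mul_one, mul_zero]
    rw [← sum_filter, filter_congr fun w _ => (show t ⊆ v ∪ w ↔ t \ v ⊆ w from sdiff_le_iff.symm),
      ← Icc_eq_filter_powerset, sum_Icc_neg_one_pow_card_sub]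
    exact if_congr (sdiff_eq_iff_of_disjoint hvu) rfl rfl
  have hcompl : #uᶜ = d - #u := by simp [card_compl]
  have hd : (d : ℝ) - #u = #uᶜ := by rw [hcompl, Nat.cast_sub (by simpa using card_le_univ u)]
  rw [ShOwen, sum_congr rfl fun v hv => by rw [inner v hv], hd, ← hcompl]
  by_cases hut : u ⊆ t
  · simp only [hut, true_and, mul_ite, mul_one, mul_zero, if_true]
    rw [← sum_filter, ← Icc_eq_filter_powerset,
      sum_Icc_inv_choose_card (subset_compl_iff_disjoint_right.2 sdiff_disjoint)]
    field_simp
  · simp [hut]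

theorem shOwen_eq_sum_div {d : ℕ} {val c : Finset (Fin d) → ℝ}
    (hc : ∀ s, val s = ∑ v ∈ s.powerset.erase ∅, c v) {u : Finset (Fin d)} (hu : u.Nonempty) :
    ShOwen val u
      = ∑ t ∈ Finset.univ.powerset.filter (fun t : Finset (Fin d) => u ⊆ t),
          c t / (#(t \ u) + 1) := by
  rw [eq_sum_mul_unanimityGame hc, shOwen_sum_mul]
  simp only [shOwen_unanimityGame, mul_ite, mul_zero, ← div_eq_mul_inv]
  rw [← sum_filter]
  refine sum_congr (ext fun t => ?_) fun _ _ => rfl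
  simp only [mem_filter, mem_erase, mem_powerset, subset_univ, and_true, true_and]
  exact ⟨And.right, fun hut => ⟨(hu.mono hut).ne_empty, hut⟩⟩

theorem shapleyOwen_bracketing_general
    {d : ℕ} (val : Finset (Fin d) → ℝ)
    (c : Finset (Fin d) → ℝ) (hcnonneg : ∀ v, 0 ≤ c v)
    (hc : ∀ u : Finset (Fin d), val u = ∑ v ∈ u.powerset.erase ∅, c v)
    (u : Finset (Fin d)) (hu : u.Nonempty) :
    c u ≤ ShOwen val u ∧
    ShOwen val u
      ≤ ∑ v ∈ Finset.univ.powerset.filter (fun v : Finset (Fin d) => u ⊆ v), c v ∧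
    ShOwen val u
      ≤ (val u +
          ∑ v ∈ Finset.univ.powerset.filter (fun v : Finset (Fin d) => u ⊆ v), c v)
        / 2 := by
  set F := Finset.univ.powerset.filter (fun v : Finset (Fin d) => u ⊆ v)
  have huF : u ∈ F := by simp [F]
  have hcu : c u ≤ val u :=
    hc u ▸ single_le_sum (fun v _ => hcnonneg v) (by simp [hu.ne_empty])
  have hterm : ∀ t ∈ F, 0 ≤ c t / (#(t \ u) + 1) := fun t _ => by
    have := hcnonneg t; positivity
  have hhalf : ∀ t ∈ F.erase u, c t / (#(t \ u) + 1) ≤ c t / 2 := fun t ht => by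
    obtain ⟨htu, ht⟩ := mem_erase.1 ht
    have hsd : (t \ u).Nonempty :=
      sdiff_nonempty.2 fun h => htu (h.antisymm (mem_filter.1 ht).2)
    have : (1 : ℝ) ≤ #(t \ u) := by exact_mod_cast hsd.card_pos
    gcongr
    · exact hcnonneg t
    · linarith
  have hself : c u / (#(u \ u) + 1) = c u := by simp
  rw [shOwen_eq_sum_div hc hu]
  refine ⟨hself ▸ single_le_sum hterm huF,
    sum_le_sum fun t _ => div_le_self (hcnonneg t) (by simp), ?_⟩
  have hrest := sum_le_sum hhalf
  rw [← sum_div] at hrest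
  rw [← add_sum_erase F _ huF, ← add_sum_erase F c huF, hself]
  linarith

/-- Bracketing inequalities for Shapley-Owen values of games with
nonnegative Harsanyi dividends: `c_u ≤ Sh_u(val) ≤ γ_u` where
`γ_u = Σ_{v ⊇ u} c_v` is the superset importance measure, and the sharper bound
`Sh_u(val) ≤ (val(u) + γ_u)/2`. -/
theorem shapleyOwen_bracketing
    {d : ℕ} (hd : 1 ≤ d) (val : Finset (Fin d) → ℝ) (h0 : val ∅ = 0)
    (c : Finset (Fin d) → ℝ) (hcnonneg : ∀ v, 0 ≤ c v)
    (hc : ∀ u : Finset (Fin d), val u = ∑ v ∈ u.powerset.erase ∅, c v)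
    (u : Finset (Fin d)) (hu : u.Nonempty) :
    c u ≤ ShOwen val u ∧
    ShOwen val u
      ≤ ∑ v ∈ Finset.univ.powerset.filter (fun v : Finset (Fin d) => u ⊆ v), c v ∧
    ShOwen val u
      ≤ (val u +
          ∑ v ∈ Finset.univ.powerset.filter (fun v : Finset (Fin d) => u ⊆ v), c v)
        / 2 :=
  shapleyOwen_bracketing_general val c hcnonneg hc u hu
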